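/- With G = diag(e^{i(u₁-u)/4}, e^{-i(u₁-u)/4}), μ = 2 arctan(2/(bλ)), and M = R⁽³⁾(-(u₂+u₁)/2)·R⁽¹⁾(μ)·R⁽³⁾((u₁₂+u)/2), we have G⁻¹·M·G₂ = V, where G₂ = diag(e^{i(u₁₂-u₂)/4}, e^{-i(u₁₂-u₂)/4}) and V = (1/√(1+(q/2)²λ^{-2}))[[1, -(i/2)q e^{i(u₂+u)/2}λ^{-1}],[-(i/2)q e^{-i(u₂+u)/2}λ^{-1}, 1]] with q = 4/b. -/
import Mathlib

open Matrix Complex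

noncomputable section

def R1 (x : ℝ) : Matrix (Fin 2) (Fin 2) ℂ :=
  !![(Real.cos (x/2) : ℂ), -Complex.I * Real.sin (x/2);
     -Complex.I * Real.sin (x/2), (Real.cos (x/2) : ℂ)]

def R3 (x : ℝ) : Matrix (Fin 2) (Fin 2) ℂ :=
  !![Complex.exp (-Complex.I * (x/2)), 0; 0, Complex.exp (Complex.I * (x/2))]

def dV (q u u₂ lam : ℝ) : Matrix (Fin 2) (Fin 2) ℂ :=
  ((Real.sqrt (1 + (q/2)^2 * (lam⁻¹)^2) : ℂ))⁻¹ •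
    !![1, -(Complex.I/2) * q * Complex.exp (Complex.I * ((u₂ + u)/2)) * (lam : ℂ)⁻¹;
       -(Complex.I/2) * q * Complex.exp (-Complex.I * ((u₂ + u)/2)) * (lam : ℂ)⁻¹, 1]

lemma exp4 (a b c d s : ℂ) :
    Complex.exp a * (Complex.exp b * s * Complex.exp c) * Complex.exp d
      = Complex.exp (a + b + c + d) * s := by
  rw [Complex.exp_add, Complex.exp_add, Complex.exp_add]; ring

/-- Gauging the discrete Frenet transition matrix
`M = R⁽³⁾(-(u₂+u₁)/2)R⁽¹⁾(μ)R⁽³⁾((u₁₂+u)/2)` by `G = diag(e^{i(u₁-u)/4}, e^{-i(u₁-u)/4})`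
gives the discrete extended frame matrix `V`, with `q = 4/b`. -/
theorem frenet_gauge_M (b lam u u₁ u₂ u₁₂ : ℝ) (hb : 0 < b) (hlam : 0 < lam) :
    let G : Matrix (Fin 2) (Fin 2) ℂ :=
      !![Complex.exp (Complex.I * ((u₁ - u)/4)), 0;
         0, Complex.exp (-Complex.I * ((u₁ - u)/4))]
    let G₂ : Matrix (Fin 2) (Fin 2) ℂ :=
      !![Complex.exp (Complex.I * ((u₁₂ - u₂)/4)), 0;
         0, Complex.exp (-Complex.I * ((u₁₂ - u₂)/4))]
    let M := R3 (-((u₂ + u₁)/2)) * R1 (2 * Real.arctan (2 / (b * lam))) * R3 ((u₁₂ + u)/2)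
    G⁻¹ * M * G₂ = dV (4/b) u u₂ lam := by
  intro G G₂ M
  have hGinv : G⁻¹ = !![Complex.exp (-Complex.I * ((u₁ - u)/4)), 0;
         0, Complex.exp (Complex.I * ((u₁ - u)/4))] := by
    apply Matrix.inv_eq_right_inv
    ext i j
    fin_cases i <;> fin_cases j <;>
      simp [G, Matrix.mul_apply, Fin.sum_univ_two, ← Complex.exp_add] <;> ring_nf
  have hμ : (2 * Real.arctan (2 / (b * lam)))/2 = Real.arctan (2 / (b * lam)) := by ring
  have hq : 1 + (4/b/2)^2 * ((lam:ℝ)⁻¹)^2 = 1 + (2/(b*lam))^2 := by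
    field_simp
    ring
  have hcos : Real.cos (Real.arctan (2 / (b * lam)))
      = (Real.sqrt (1 + (4/b/2)^2 * (lam⁻¹)^2))⁻¹ := by
    rw [Real.cos_arctan, hq, one_div]
  have hsin : Real.sin (Real.arctan (2 / (b * lam)))
      = (2 / (b * lam)) * (Real.sqrt (1 + (4/b/2)^2 * (lam⁻¹)^2))⁻¹ := by
    rw [Real.sin_arctan, hq, div_eq_mul_inv]
  rw [hGinv]
  ext i j
  fin_cases i <;> fin_cases j <;>
    simp [M, R1, R3, dV, G₂, Matrix.mul_apply, Fin.sum_univ_two, hμ, hcos, hsin,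
      Complex.ofReal_inv, Complex.ofReal_mul, Complex.ofReal_div] <;>
    rw [exp4] <;> ring_nf <;> simp [Complex.exp_zero]
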